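/- (Mean curvature of ruled graphs, identity (2.8)) Under the ruled hypothesis Q = −uP, u_y + u·u_x = 0, one has W·(E·N − 2F·M + G·L) = f_xx + f_yy on D; equivalently the mean curvature of the graph of f is H = (f_xx + f_yy)/(2W³). -/

import Mathlib

/-!
With `A, B, C` the second derivatives `f_xx, f_xy, f_yy`, a direct computation gives
`W (EN − 2FM + GL) = A + C + (Q²A − 2PQB + P²C)`. Since `P_x = A`, `P_y + Q_x = 2B` and
`Q_y = C`, the bracket is `⟪J v, v⟫` for the Jacobian `J` of `(P, Q)` and `v = (Q, −P)`.
Differentiating `Q = −uP` turns this form into `−P³ (u_y + u u_x)`, which vanishes by the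
Burgers equation.
-/

noncomputable section

/-- Partial derivative with respect to the first (x) variable. -/
def pdx (f : ℝ × ℝ → ℝ) : ℝ × ℝ → ℝ := fun p => fderiv ℝ f p (1, 0)

/-- Partial derivative with respect to the second (y) variable. -/
def pdy (f : ℝ × ℝ → ℝ) : ℝ × ℝ → ℝ := fun p => fderiv ℝ f p (0, 1)

/-- `P = f_x + y/2`. -/
def Pf (f : ℝ × ℝ → ℝ) : ℝ × ℝ → ℝ := fun p => pdx f p + p.2 / 2

/-- `Q = f_y - x/2`. -/
def Qf (f : ℝ × ℝ → ℝ) : ℝ × ℝ → ℝ := fun p => pdy f p - p.1 / 2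

/-- First fundamental form coefficient `E = 1 + P²`. -/
def Ef (f : ℝ × ℝ → ℝ) : ℝ × ℝ → ℝ := fun p => 1 + Pf f p ^ 2

/-- First fundamental form coefficient `F = P·Q`. -/
def Ff (f : ℝ × ℝ → ℝ) : ℝ × ℝ → ℝ := fun p => Pf f p * Qf f p

/-- First fundamental form coefficient `G = 1 + Q²`. -/
def Gf (f : ℝ × ℝ → ℝ) : ℝ × ℝ → ℝ := fun p => 1 + Qf f p ^ 2

/-- `W = √(EG − F²) = √(1 + P² + Q²)`. -/
def Wf (f : ℝ × ℝ → ℝ) : ℝ × ℝ → ℝ := fun p => Real.sqrt (1 + Pf f p ^ 2 + Qf f p ^ 2)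

/-- Second fundamental form coefficient `L = (f_xx + PQ)/W`. -/
def Lf (f : ℝ × ℝ → ℝ) : ℝ × ℝ → ℝ := fun p => (pdx (pdx f) p + Pf f p * Qf f p) / Wf f p

/-- Second fundamental form coefficient `M = (f_xy + (Q² − P²)/2)/W`. -/
def Mf (f : ℝ × ℝ → ℝ) : ℝ × ℝ → ℝ :=
  fun p => (pdx (pdy f) p + (Qf f p ^ 2 - Pf f p ^ 2) / 2) / Wf f p

/-- Second fundamental form coefficient `N = (f_yy − PQ)/W`. -/
def Nf (f : ℝ × ℝ → ℝ) : ℝ × ℝ → ℝ := fun p => (pdy (pdy f) p - Pf f p * Qf f p) / Wf f p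

/-- Mean curvature `H = (EN − 2FM + GL)/(2W²)`. -/
def Hf (f : ℝ × ℝ → ℝ) : ℝ × ℝ → ℝ :=
  fun p => (Ef f p * Nf f p - 2 * Ff f p * Mf f p + Gf f p * Lf f p) / (2 * Wf f p ^ 2)

/-- The Laplace–Beltrami operator of the graph of `f`, with the sign convention
`Δφ = −(1/W)[∂_x((G φ_x − F φ_y)/W) + ∂_y((−F φ_x + E φ_y)/W)]`. -/
def lapS (f φ : ℝ × ℝ → ℝ) : ℝ × ℝ → ℝ := fun p =>
  -(1 / Wf f p) *
    (pdx (fun q => (Gf f q * pdx φ q - Ff f q * pdy φ q) / Wf f q) p +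
     pdy (fun q => (-(Ff f q) * pdx φ q + Ef f q * pdy φ q) / Wf f q) p)

/-- Mean curvature in the form `H = (f_xx + f_yy)/(2W³)`. -/
def Hm (f : ℝ × ℝ → ℝ) : ℝ × ℝ → ℝ :=
  fun p => (pdx (pdx f) p + pdy (pdy f) p) / (2 * Wf f p ^ 3)

/-- `H₁ = (f_xx + f_yy)/W`. -/
def H1f (f : ℝ × ℝ → ℝ) : ℝ × ℝ → ℝ :=
  fun p => (pdx (pdx f) p + pdy (pdy f) p) / Wf f p

open Filter Topology

theorem fderiv_apply_fderiv_apply {E F : Type*} [NormedAddCommGroup E] [NormedSpace ℝ E]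
    [NormedAddCommGroup F] [NormedSpace ℝ F] {f : E → F} {x : E}
    (h : DifferentiableAt ℝ (fderiv ℝ f) x) (v w : E) :
    fderiv ℝ (fun y => fderiv ℝ f y v) x w = fderiv ℝ (fderiv ℝ f) x w v := by
  simp [fderiv_clm_apply h (differentiableAt_const v)]

section PartialDerivatives

variable {f g h : ℝ × ℝ → ℝ} {p : ℝ × ℝ}

theorem pdx_mul (hg : DifferentiableAt ℝ g p) (hh : DifferentiableAt ℝ h p) :
    pdx (fun q => g q * h q) p = g p * pdx h p + h p * pdx g p := by
  simp [pdx, fderiv_fun_mul hg hh]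

theorem pdy_mul (hg : DifferentiableAt ℝ g p) (hh : DifferentiableAt ℝ h p) :
    pdy (fun q => g q * h q) p = g p * pdy h p + h p * pdy g p := by
  simp [pdy, fderiv_fun_mul hg hh]

theorem pdx_neg : pdx (fun q => -g q) p = -pdx g p := by
  simp [pdx, fderiv_fun_neg]

theorem pdy_neg : pdy (fun q => -g q) p = -pdy g p := by
  simp [pdy, fderiv_fun_neg]

theorem pdy_pdx_eq_pdx_pdy (hf : ContDiffAt ℝ 2 f p) : pdy (pdx f) p = pdx (pdy f) p := by
  have hdf : DifferentiableAt ℝ (fderiv ℝ f) p :=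
    (hf.fderiv_right le_rfl).differentiableAt one_ne_zero
  unfold pdx pdy
  rw [fderiv_apply_fderiv_apply hdf, fderiv_apply_fderiv_apply hdf]
  exact hf.isSymmSndFDerivAt (by simp) _ _

theorem differentiableAt_pdx (hf : ContDiffAt ℝ 2 f p) : DifferentiableAt ℝ (pdx f) p :=
  ((hf.fderiv_right le_rfl).differentiableAt one_ne_zero).clm_apply (differentiableAt_const _)

theorem differentiableAt_pdy (hf : ContDiffAt ℝ 2 f p) : DifferentiableAt ℝ (pdy f) p :=
  ((hf.fderiv_right le_rfl).differentiableAt one_ne_zero).clm_apply (differentiableAt_const _)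

theorem fderiv_snd_div_two :
    fderiv ℝ (fun q : ℝ × ℝ => q.2 / 2) p = (2 : ℝ)⁻¹ • ContinuousLinearMap.snd ℝ ℝ ℝ := by
  simp_rw [div_eq_mul_inv]
  rw [fderiv_mul_const differentiableAt_snd, fderiv_snd]

theorem fderiv_fst_div_two :
    fderiv ℝ (fun q : ℝ × ℝ => q.1 / 2) p = (2 : ℝ)⁻¹ • ContinuousLinearMap.fst ℝ ℝ ℝ := by
  simp_rw [div_eq_mul_inv]
  rw [fderiv_mul_const differentiableAt_fst, fderiv_fst]

theorem differentiableAt_Pf (hf : DifferentiableAt ℝ (pdx f) p) : DifferentiableAt ℝ (Pf f) p :=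
  hf.add (by fun_prop)

theorem pdx_Pf (hf : DifferentiableAt ℝ (pdx f) p) : pdx (Pf f) p = pdx (pdx f) p := by
  change fderiv ℝ (fun q => pdx f q + q.2 / 2) p (1, 0) = _
  rw [fderiv_fun_add hf (by fun_prop), fderiv_snd_div_two]
  simp [pdx]

theorem pdy_Pf (hf : DifferentiableAt ℝ (pdx f) p) : pdy (Pf f) p = pdy (pdx f) p + 1 / 2 := by
  change fderiv ℝ (fun q => pdx f q + q.2 / 2) p (0, 1) = _
  rw [fderiv_fun_add hf (by fun_prop), fderiv_snd_div_two]
  simp [pdy]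

theorem pdx_Qf (hf : DifferentiableAt ℝ (pdy f) p) : pdx (Qf f) p = pdx (pdy f) p - 1 / 2 := by
  change fderiv ℝ (fun q => pdy f q - q.1 / 2) p (1, 0) = _
  rw [fderiv_fun_sub hf (by fun_prop), fderiv_fst_div_two]
  simp [pdx]

theorem pdy_Qf (hf : DifferentiableAt ℝ (pdy f) p) : pdy (Qf f) p = pdy (pdy f) p := by
  change fderiv ℝ (fun q => pdy f q - q.1 / 2) p (0, 1) = _
  rw [fderiv_fun_sub hf (by fun_prop), fderiv_fst_div_two]
  simp [pdy]

end PartialDerivatives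

def jacobianQuadForm (g h : ℝ × ℝ → ℝ) (p v : ℝ × ℝ) : ℝ :=
  v.1 * (v.1 * pdx g p + v.2 * pdy g p) + v.2 * (v.1 * pdx h p + v.2 * pdy h p)

theorem jacobianQuadForm_of_eventuallyEq_neg_mul {g h u : ℝ × ℝ → ℝ} {p : ℝ × ℝ}
    (hg : DifferentiableAt ℝ g p) (hu : DifferentiableAt ℝ u p)
    (hh : h =ᶠ[𝓝 p] fun q => -u q * g q) :
    jacobianQuadForm g h p (h p, -g p) = -g p ^ 3 * (pdy u p + u p * pdx u p) := by
  have hx : pdx h p = pdx (fun q => -u q * g q) p := by rw [pdx, pdx, hh.fderiv_eq]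
  have hy : pdy h p = pdy (fun q => -u q * g q) p := by rw [pdy, pdy, hh.fderiv_eq]
  rw [pdx_mul hu.fun_neg hg, pdx_neg] at hx
  rw [pdy_mul hu.fun_neg hg, pdy_neg] at hy
  rw [jacobianQuadForm, hx, hy, hh.eq_of_nhds]
  ring

theorem jacobianQuadForm_Pf_Qf {f : ℝ × ℝ → ℝ} {p : ℝ × ℝ} (hf : ContDiffAt ℝ 2 f p) :
    jacobianQuadForm (Pf f) (Qf f) p (Qf f p, -Pf f p) =
      Qf f p ^ 2 * pdx (pdx f) p - 2 * Pf f p * Qf f p * pdx (pdy f) p +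
        Pf f p ^ 2 * pdy (pdy f) p := by
  rw [jacobianQuadForm, pdx_Pf (differentiableAt_pdx hf), pdy_Pf (differentiableAt_pdx hf),
    pdx_Qf (differentiableAt_pdy hf), pdy_Qf (differentiableAt_pdy hf), pdy_pdx_eq_pdx_pdy hf]
  ring

theorem Wf_pos (f : ℝ × ℝ → ℝ) (p : ℝ × ℝ) : 0 < Wf f p :=
  Real.sqrt_pos.2 (by positivity)

theorem Wf_mul_meanCurvatureNumerator (f : ℝ × ℝ → ℝ) (p : ℝ × ℝ) :
    Wf f p * (Ef f p * Nf f p - 2 * Ff f p * Mf f p + Gf f p * Lf f p) =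
      pdx (pdx f) p + pdy (pdy f) p +
        (Qf f p ^ 2 * pdx (pdx f) p - 2 * Pf f p * Qf f p * pdx (pdy f) p +
          Pf f p ^ 2 * pdy (pdy f) p) := by
  have hW := (Wf_pos f p).ne'
  simp only [Ef, Ff, Gf, Lf, Mf, Nf]
  field_simp
  ring

theorem Hf_eq_div (f : ℝ × ℝ → ℝ) (p : ℝ × ℝ) :
    Hf f p = Wf f p * (Ef f p * Nf f p - 2 * Ff f p * Mf f p + Gf f p * Lf f p) /
      (2 * Wf f p ^ 3) := by
  have hW := (Wf_pos f p).ne'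
  rw [Hf]
  field_simp

theorem mean_curvature_ruled_graph_heisenberg_general
    (D : Set (ℝ × ℝ)) (hD : IsOpen D)
    (f : ℝ × ℝ → ℝ) (hf : ContDiffOn ℝ (⊤ : ℕ∞) f D)
    (u : ℝ × ℝ → ℝ) (hu : ContDiffOn ℝ (⊤ : ℕ∞) u D)
    (hruled : ∀ p ∈ D, Qf f p = -(u p) * Pf f p)
    (hburgers : ∀ p ∈ D, pdy u p + u p * pdx u p = 0) :
    ∀ p ∈ D,
      (Wf f p * (Ef f p * Nf f p - 2 * Ff f p * Mf f p + Gf f p * Lf f p) =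
        pdx (pdx f) p + pdy (pdy f) p) ∧
      (Hf f p = (pdx (pdx f) p + pdy (pdy f) p) / (2 * Wf f p ^ 3)) := by
  intro p hp
  have hD_nhds : D ∈ 𝓝 p := hD.mem_nhds hp
  have hf2 : ContDiffAt ℝ 2 f p := (hf.contDiffAt hD_nhds).of_le (WithTop.coe_le_coe.2 le_top)
  have hu1 : DifferentiableAt ℝ u p := (hu.contDiffAt hD_nhds).differentiableAt (by simp)
  have hdefect :
      Qf f p ^ 2 * pdx (pdx f) p - 2 * Pf f p * Qf f p * pdx (pdy f) p +
        Pf f p ^ 2 * pdy (pdy f) p = 0 := by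
    have hP1 := differentiableAt_Pf (differentiableAt_pdx hf2)
    rw [← jacobianQuadForm_Pf_Qf hf2, jacobianQuadForm_of_eventuallyEq_neg_mul hP1 hu1
      (eventually_of_mem hD_nhds hruled), hburgers p hp, mul_zero]
  have hnum := Wf_mul_meanCurvatureNumerator f p
  rw [hdefect, add_zero] at hnum
  exact ⟨hnum, by rw [Hf_eq_div, hnum]⟩

/-- **Mean curvature of ruled graphs** (identity (2.8)): under the ruled hypothesis
`Q = −uP`, `u_y + u·u_x = 0`, one has `W(EN − 2FM + GL) = f_xx + f_yy` on `D`; equivalently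
the mean curvature of the graph of `f` is `H = (f_xx + f_yy)/(2W³)`. -/
theorem mean_curvature_ruled_graph_heisenberg
    (D : Set (ℝ × ℝ)) (hD : IsOpen D) (hDne : D.Nonempty)
    (f : ℝ × ℝ → ℝ) (hf : ContDiffOn ℝ (⊤ : ℕ∞) f D)
    (u : ℝ × ℝ → ℝ) (hu : ContDiffOn ℝ (⊤ : ℕ∞) u D)
    (hruled : ∀ p ∈ D, Qf f p = -(u p) * Pf f p)
    (hburgers : ∀ p ∈ D, pdy u p + u p * pdx u p = 0) :
    ∀ p ∈ D,
      (Wf f p * (Ef f p * Nf f p - 2 * Ff f p * Mf f p + Gf f p * Lf f p) =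
        pdx (pdx f) p + pdy (pdy f) p) ∧
      (Hf f p = (pdx (pdx f) p + pdy (pdy f) p) / (2 * Wf f p ^ 3)) :=
  mean_curvature_ruled_graph_heisenberg_general D hD f hf u hu hruled hburgers
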